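/- arXiv:2509.22043 — 2 statements merged into one kernel-verified Lean document; each statement's English description precedes it below -/
import Mathlib

section
/- Let G be a finite connected graph on vertices identified with points p_1,...,p_N in ℝ^d, with Euclidean edge weights w(u,v) = ‖p_v − p_u‖, and let S(p_i,p_j) denote the shortest-path distance in G. Let V ∈ ℝ^{d×k} have orthonormal columns, and define projected edge weights w'(u,v) = ‖Vᵀ(p_v − p_u)‖ on the same edge set, with projected shortest-path distance S̃(p_i,p_j). For a pair (i,j) with p_i ≠ p_j, set r_{ij} = ‖p_j − p_i‖ / S(p_i,p_j) and r̃_{ij} = ‖Vᵀ(p_j − p_i)‖ / S̃(p_i,p_j). Let ψ_{ij} = ‖Vᵀ(p_j − p_i)‖ / ‖p_j − p_i‖, let P̃_{ij} be a path from i to j achieving S̃(p_i,p_j), and let φ*_{ij} = min over edges e (as vectors p_v − p_u in ℝ^d) of P̃_{ij} of ‖Vᵀe‖/‖e‖. If φ*_{ij} > 0 and S̃(p_i,p_j) > 0 and ‖Vᵀ(p_j − p_i)‖ > 0, then ψ_{ij} ≤ r̃_{ij}/r_{ij} ≤ 1/φ*_{ij}. -/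
open scoped BigOperators

/-- Length of a walk in a graph under an edge-weight function `w`:
the sum of the weights of its edges (darts). -/
noncomputable def SimpleGraph.Walk.wLength {V : Type*} {G : SimpleGraph V}
    (w : V → V → ℝ) {i j : V} (p : G.Walk i j) : ℝ :=
  (p.darts.map fun d => w d.fst d.snd).sum

/-- Shortest-path distance between `i` and `j`: the infimum of the lengths of
walks from `i` to `j` under the edge-weight function `w`. -/
noncomputable def spDist {V : Type*} (G : SimpleGraph V) (w : V → V → ℝ) (i j : V) : ℝ :=
  sInf {L | ∃ p : G.Walk i j, p.wLength w = L}

open scoped RealInnerProductSpace in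
lemma nonexp_aux {d k : ℕ} (V : Matrix (Fin d) (Fin k) ℝ) (hV : V.transpose * V = 1)
    (x : EuclideanSpace ℝ (Fin d)) :
    ‖(Matrix.toEuclideanLin V.transpose) x‖ ≤ ‖x‖ := by
  have htr : V.transpose = V.conjTranspose := by
    ext a b; simp [Matrix.conjTranspose_apply]
  set M := Matrix.toEuclideanLin V.transpose with hM
  set L := Matrix.toEuclideanLin V
  have hadj : M = LinearMap.adjoint L := by
    rw [hM, htr, Matrix.toEuclideanLin_conjTranspose_eq_adjoint]
  have hML : ∀ y, M (L y) = y := by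
    intro y
    show Matrix.toEuclideanLin V.transpose (Matrix.toEuclideanLin V y) = y
    rw [Matrix.toEuclideanLin_apply, Matrix.toEuclideanLin_apply]
    simp [Matrix.mulVec_mulVec, hV]
  have hLiso : ∀ y : EuclideanSpace ℝ (Fin k), ‖L y‖ = ‖y‖ := by
    intro y
    have h1 : ⟪L y, L y⟫ = ⟪y, y⟫ := by
      calc ⟪L y, L y⟫ = ⟪y, (LinearMap.adjoint L) (L y)⟫ := by
            rw [LinearMap.adjoint_inner_right]
        _ = ⟪y, y⟫ := by rw [← hadj, hML]
    have h2 := congrArg Real.sqrt h1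
    rwa [← norm_eq_sqrt_real_inner, ← norm_eq_sqrt_real_inner] at h2
  have h2 : ‖M x‖ ^ 2 ≤ ‖x‖ * ‖M x‖ := by
    have h3 : (‖M x‖:ℝ) ^ 2 = ⟪x, L (M x)⟫ := by
      rw [← real_inner_self_eq_norm_sq]
      nth_rewrite 1 [hadj]
      rw [LinearMap.adjoint_inner_left]
    rw [h3]
    calc ⟪x, L (M x)⟫ ≤ ‖x‖ * ‖L (M x)‖ := real_inner_le_norm _ _
      _ = ‖x‖ * ‖M x‖ := by rw [hLiso]
  rcases eq_or_lt_of_le (norm_nonneg (M x)) with h | h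
  · rw [← h]; exact norm_nonneg x
  · nlinarith

lemma wlen_nonneg_aux {N : ℕ} {G : SimpleGraph (Fin N)}
    (w : Fin N → Fin N → ℝ) (hw : ∀ u v, 0 ≤ w u v)
    {i j : Fin N} (q : G.Walk i j) : 0 ≤ q.wLength w := by
  apply List.sum_nonneg
  intro x hx
  obtain ⟨e, _, rfl⟩ := List.mem_map.1 hx
  exact hw _ _

lemma norm_le_wlen_aux {N d : ℕ} {G : SimpleGraph (Fin N)}
    (p : Fin N → EuclideanSpace ℝ (Fin d))
    (w : Fin N → Fin N → ℝ) (hw : ∀ u v, w u v = ‖p v - p u‖)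
    {i j : Fin N} (q : G.Walk i j) : ‖p j - p i‖ ≤ q.wLength w := by
  induction q with
  | nil => simp [SimpleGraph.Walk.wLength]
  | @cons u v j h q ih =>
    simp only [SimpleGraph.Walk.wLength, SimpleGraph.Walk.darts_cons, List.map_cons,
      List.sum_cons]
    have tri : ‖p j - p u‖ ≤ ‖p v - p u‖ + ‖p j - p v‖ := by
      have h4 : p j - p u = (p v - p u) + (p j - p v) := by abel
      rw [h4]; exact norm_add_le _ _
    have h5 := ih
    rw [hw]
    unfold SimpleGraph.Walk.wLength at h5
    linarith

lemma wlen_mono_aux {N : ℕ} {G : SimpleGraph (Fin N)}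
    (w w' : Fin N → Fin N → ℝ) (hle : ∀ u v, w' u v ≤ w u v)
    {i j : Fin N} (q : G.Walk i j) : q.wLength w' ≤ q.wLength w := by
  unfold SimpleGraph.Walk.wLength
  apply List.sum_le_sum
  intro e _
  exact hle _ _

/-- **Pairwise a-posteriori certificate.**
For an admissible pair `(i,j)` with `p i ≠ p j`, writing `r = ‖p j - p i‖ / S(i,j)`,
`r̃ = ‖Vᵀ(p j - p i)‖ / S̃(i,j)`, `ψ = ‖Vᵀ(p j - p i)‖ / ‖p j - p i‖`, and
`φ⋆` the minimum of `‖Vᵀe‖/‖e‖` over the edges `e` of a projected shortest path `P̃`,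
if `φ⋆ > 0`, `S̃(i,j) > 0` and `‖Vᵀ(p j - p i)‖ > 0`, then `ψ ≤ r̃/r ≤ 1/φ⋆`. -/
theorem pairwise_a_posteriori_certificate
    {N d k : ℕ} (G : SimpleGraph (Fin N)) (hGconn : G.Connected)
    (p : Fin N → EuclideanSpace ℝ (Fin d))
    (V : Matrix (Fin d) (Fin k) ℝ) (hV : V.transpose * V = 1)
    (w w' : Fin N → Fin N → ℝ)
    (hw : ∀ u v, w u v = ‖p v - p u‖)
    (hw' : ∀ u v, w' u v = ‖(Matrix.toEuclideanLin V.transpose) (p v - p u)‖)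
    (i j : Fin N) (hpij : p i ≠ p j)
    (r r' ψ φ : ℝ)
    (hr : r = ‖p j - p i‖ / spDist G w i j)
    (hr' : r' = ‖(Matrix.toEuclideanLin V.transpose) (p j - p i)‖ / spDist G w' i j)
    (hψ : ψ = ‖(Matrix.toEuclideanLin V.transpose) (p j - p i)‖ / ‖p j - p i‖)
    (P : G.Walk i j) (hP : P.wLength w' = spDist G w' i j)
    (hφ : IsLeast {t | ∃ e ∈ P.darts,
        t = ‖(Matrix.toEuclideanLin V.transpose) (p e.snd - p e.fst)‖ /
            ‖p e.snd - p e.fst‖} φ)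
    (hφpos : 0 < φ)
    (hS' : 0 < spDist G w' i j)
    (hVn : 0 < ‖(Matrix.toEuclideanLin V.transpose) (p j - p i)‖) :
    ψ ≤ r' / r ∧ r' / r ≤ 1 / φ := by
  set M := Matrix.toEuclideanLin V.transpose with hMdef
  set A := ‖p j - p i‖ with hAdef
  set B := ‖M (p j - p i)‖ with hBdef
  set S := spDist G w i j with hSdef
  set S' := spDist G w' i j with hS'def
  have hwnn : ∀ u v, 0 ≤ w u v := fun u v => by rw [hw]; positivity
  have hw'nn : ∀ u v, 0 ≤ w' u v := fun u v => by rw [hw']; positivity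
  have hw'le : ∀ u v, w' u v ≤ w u v := fun u v => by
    rw [hw, hw']; exact nonexp_aux V hV _
  have hbdd : BddBelow {L | ∃ q : G.Walk i j, q.wLength w = L} :=
    ⟨0, fun L ⟨q, hq⟩ => hq ▸ wlen_nonneg_aux w hwnn q⟩
  have hbdd' : BddBelow {L | ∃ q : G.Walk i j, q.wLength w' = L} :=
    ⟨0, fun L ⟨q, hq⟩ => hq ▸ wlen_nonneg_aux w' hw'nn q⟩
  have hAp : (0:ℝ) < A := norm_sub_pos_iff.2 hpij.symm
  have hS_leP : S ≤ P.wLength w := csInf_le hbdd ⟨P, rfl⟩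
  have hA_le_S : A ≤ S :=
    le_csInf ⟨_, P, rfl⟩ (fun L ⟨q, hq⟩ => hq ▸ norm_le_wlen_aux p w hw q)
  have hS'_le_S : S' ≤ S :=
    le_csInf ⟨_, P, rfl⟩ (fun L ⟨q, hq⟩ => hq ▸
      le_trans (csInf_le hbdd' ⟨q, rfl⟩) (wlen_mono_aux w w' hw'le q))
  have hSpos : (0:ℝ) < S := lt_of_lt_of_le hAp hA_le_S
  have hB_le_A : B ≤ A := nonexp_aux V hV _
  have hφP : φ * P.wLength w ≤ P.wLength w' := by
    unfold SimpleGraph.Walk.wLength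
    rw [← List.sum_map_mul_left]
    apply List.sum_le_sum
    intro e he
    have hmem : φ ≤ ‖M (p e.snd - p e.fst)‖ / ‖p e.snd - p e.fst‖ := hφ.2 ⟨e, he, rfl⟩
    rcases eq_or_lt_of_le (norm_nonneg (p e.snd - p e.fst)) with hz | hz
    · have h0 : p e.snd - p e.fst = 0 := norm_eq_zero.1 hz.symm
      rw [hw, hw', h0]
      simp
    · rw [hw, hw']
      rw [le_div_iff₀ hz] at hmem
      exact hmem
  have hφS : φ * S ≤ S' := by
    calc φ * S ≤ φ * P.wLength w := mul_le_mul_of_nonneg_left hS_leP hφpos.le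
      _ ≤ P.wLength w' := hφP
      _ = S' := hP
  constructor
  · rw [hψ, hr, hr', div_div_div_comm, le_div_iff₀ (by positivity : (0:ℝ) < S'/S)]
    exact mul_le_of_le_one_right (by positivity) ((div_le_one hSpos).2 hS'_le_S)
  · rw [hr, hr', div_div_div_comm, div_le_div_iff₀ (by positivity : (0:ℝ) < S'/S) hφpos]
    have h1 : B / A ≤ 1 := (div_le_one hAp).2 hB_le_A
    have h2 : φ ≤ S' / S := (le_div_iff₀ hSpos).2 (by linarith)
    nlinarith
end

section
/- Let p_1,...,p_N ∈ ℝ^d be the vertices of a finite connected graph G with Euclidean edge weights w(u,v) = ‖p_v − p_u‖ and shortest-path distance S, let V ∈ ℝ^{d×k} have orthonormal columns with projected weights w'(u,v) = ‖Vᵀ(p_v − p_u)‖ and projected shortest-path distance S̃, and define r_{ij} = ‖p_j − p_i‖/S(p_i,p_j) and r̃_{ij} = ‖Vᵀ(p_j − p_i)‖/S̃(p_i,p_j) for p_i ≠ p_j. Let φ_G = min over all edges e of G (viewed as vectors p_v − p_u ≠ 0 in ℝ^d) of ‖Vᵀe‖/‖e‖, and assume φ_G > 0. Then for every pair (i,j)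 with p_i ≠ p_j and ‖Vᵀ(p_j − p_i)‖ > 0, the distortion satisfies r̃_{ij}/r_{ij} ≤ 1/φ_G. -/
/-!
The projection `Vᵀ` is a contraction, so `‖Vᵀ(p j - p i)‖ ≤ ‖p j - p i‖`. On every edge the
projected weight is at least `φ_G` times the Euclidean one, so every walk, and hence the
shortest-path distance, is at least `φ_G` times longer in the projected weights: `φ_G S ≤ S̃`.
Multiplying the two estimates gives `r̃ / r ≤ 1 / φ_G`.
-/

open scoped BigOperators

open scoped Matrix Matrix.Norms.L2Operator

theorem Matrix.norm_toEuclideanLin_conjTranspose_le {𝕜 : Type*} [RCLike 𝕜] {m n : Type*}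
    [Fintype m] [Fintype n] [DecidableEq m] [DecidableEq n] {V : Matrix m n 𝕜}
    (hV : Vᴴ * V = 1) (x : EuclideanSpace 𝕜 m) : ‖toEuclideanLin Vᴴ x‖ ≤ ‖x‖ := by
  have hV1 : ‖V‖ ≤ 1 := by
    have : ‖V‖ * ‖V‖ ≤ 1 := by
      rw [← V.l2_opNorm_conjTranspose_mul_self, hV, l2_opNorm_def]
      refine ContinuousLinearMap.opNorm_le_bound _ zero_le_one fun y => ?_
      simp
    nlinarith [norm_nonneg V]
  calc ‖toEuclideanLin Vᴴ x‖ ≤ ‖Vᴴ‖ * ‖x‖ :=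
        ((toEuclideanLin.trans LinearMap.toContinuousLinearMap) Vᴴ).le_opNorm x
    _ ≤ ‖x‖ := by
        rw [l2_opNorm_conjTranspose]
        exact mul_le_of_le_one_left (norm_nonneg x) hV1

namespace SimpleGraph

variable {V : Type*} {G : SimpleGraph V} {w w' : V → V → ℝ} {c : ℝ}

theorem Walk.wLength_nonneg (hw : ∀ u v, G.Adj u v → 0 ≤ w u v) {i j : V} (q : G.Walk i j) :
    0 ≤ q.wLength w :=
  List.sum_nonneg <| by
    simpa only [List.mem_map] using fun _ ⟨d, _, hd⟩ => hd ▸ hw _ _ d.adj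

theorem Walk.mul_wLength_le (h : ∀ u v, G.Adj u v → c * w u v ≤ w' u v) {i j : V}
    (q : G.Walk i j) : c * q.wLength w ≤ q.wLength w' := by
  induction q with
  | nil => simp [wLength]
  | cons hadj q ih =>
    simp only [wLength, Walk.darts_cons, List.map_cons, List.sum_cons] at ih ⊢
    linarith [h _ _ hadj]

theorem spDist_nonneg (hw : ∀ u v, G.Adj u v → 0 ≤ w u v) (i j : V) : 0 ≤ spDist G w i j :=
  Real.sInf_nonneg <| by
    rintro _ ⟨q, rfl⟩
    exact q.wLength_nonneg hw

theorem mul_spDist_le_spDist (hc : 0 ≤ c) (hw : ∀ u v, G.Adj u v → 0 ≤ w u v)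
    (h : ∀ u v, G.Adj u v → c * w u v ≤ w' u v) (i j : V) :
    c * spDist G w i j ≤ spDist G w' i j := by
  rcases isEmpty_or_nonempty (G.Walk i j) with _ | hij
  · simp [spDist]
  · refine le_csInf ⟨_, hij.some, rfl⟩ ?_
    rintro _ ⟨q, rfl⟩
    calc c * spDist G w i j ≤ c * q.wLength w := by
          gcongr
          exact csInf_le ⟨0, by rintro _ ⟨q, rfl⟩; exact q.wLength_nonneg hw⟩ ⟨q, rfl⟩
      _ ≤ q.wLength w' := q.mul_wLength_le h

end SimpleGraph

-- `x / 0 = 0` covers the degenerate cases `S = 0` and `b = 0`.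
theorem div_div_div_le_one_div {a b S S' φ : ℝ} (ha : 0 ≤ a) (hab : a ≤ b) (hS : 0 ≤ S)
    (hφ : 0 < φ) (hSS' : φ * S ≤ S') : a / S' / (b / S) ≤ 1 / φ := by
  rcases hS.eq_or_lt with rfl | hS
  · simp [hφ.le]
  rcases (ha.trans hab).eq_or_lt with hb | hb
  · simp [← hb, hφ.le]
  have hS' : 0 < S' := (mul_pos hφ hS).trans_le hSS'
  rw [div_div_div_eq, div_le_div_iff₀ (mul_pos hS' hb) hφ]
  nlinarith [mul_le_mul_of_nonneg_left hSS' ha]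

theorem uniform_graphwise_bound_general
    {N d k : ℕ} (G : SimpleGraph (Fin N))
    (p : Fin N → EuclideanSpace ℝ (Fin d))
    (V : Matrix (Fin d) (Fin k) ℝ) (hV : V.transpose * V = 1)
    (w w' : Fin N → Fin N → ℝ)
    (hw : ∀ u v, w u v = ‖p v - p u‖)
    (hw' : ∀ u v, w' u v = ‖(Matrix.toEuclideanLin V.transpose) (p v - p u)‖)
    (φG : ℝ)
    (hφG : IsLeast {t | ∃ u v : Fin N, G.Adj u v ∧
        t = ‖(Matrix.toEuclideanLin V.transpose) (p v - p u)‖ / ‖p v - p u‖} φG)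
    (hφGpos : 0 < φG) :
    ∀ i j : Fin N, p i ≠ p j →
      0 < ‖(Matrix.toEuclideanLin V.transpose) (p j - p i)‖ →
      (‖(Matrix.toEuclideanLin V.transpose) (p j - p i)‖ / spDist G w' i j) /
        (‖p j - p i‖ / spDist G w i j) ≤ 1 / φG := by
  intro i j _ _
  rw [← Matrix.conjTranspose_eq_transpose_of_trivial] at hV ⊢
  have hw_nonneg : ∀ u v, G.Adj u v → 0 ≤ w u v := fun u v _ => hw u v ▸ norm_nonneg _
  have hedge : ∀ u v, G.Adj u v → φG * w u v ≤ w' u v := fun u v huv => by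
    rw [hw, hw']
    exact mul_le_of_le_div₀ (norm_nonneg _) (norm_nonneg _) (hφG.2 ⟨u, v, huv, rfl⟩)
  exact div_div_div_le_one_div (norm_nonneg _)
    (Matrix.norm_toEuclideanLin_conjTranspose_le hV _) (SimpleGraph.spDist_nonneg hw_nonneg i j)
    hφGpos (SimpleGraph.mul_spDist_le_spDist hφGpos.le hw_nonneg hedge i j)

/-- **Uniform graph-wise bound.**
On a finite connected graph on points `p₁,…,p_N ⊂ ℝ^d` (edges viewed as nonzero
vectors `p v - p u`) with Euclidean weights `w(u,v) = ‖p v - p u‖` and projected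
weights `w'(u,v) = ‖Vᵀ(p v - p u)‖` for `V` with orthonormal columns, let
`φ_G = min_{e ∈ E(G)} ‖Vᵀe‖/‖e‖` and assume `φ_G > 0`. Then for every pair
`(i,j)` with `p i ≠ p j` and `‖Vᵀ(p j - p i)‖ > 0`, the ratios
`r = ‖p j - p i‖/S(i,j)` and `r̃ = ‖Vᵀ(p j - p i)‖/S̃(i,j)` satisfy
`r̃/r ≤ 1/φ_G`. -/
theorem uniform_graphwise_bound
    {N d k : ℕ} (G : SimpleGraph (Fin N)) (hGconn : G.Connected)
    (p : Fin N → EuclideanSpace ℝ (Fin d))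
    (hedge : ∀ u v : Fin N, G.Adj u v → p u ≠ p v)
    (V : Matrix (Fin d) (Fin k) ℝ) (hV : V.transpose * V = 1)
    (w w' : Fin N → Fin N → ℝ)
    (hw : ∀ u v, w u v = ‖p v - p u‖)
    (hw' : ∀ u v, w' u v = ‖(Matrix.toEuclideanLin V.transpose) (p v - p u)‖)
    (φG : ℝ)
    (hφG : IsLeast {t | ∃ u v : Fin N, G.Adj u v ∧
        t = ‖(Matrix.toEuclideanLin V.transpose) (p v - p u)‖ / ‖p v - p u‖} φG)
    (hφGpos : 0 < φG) :
    ∀ i j : Fin N, p i ≠ p j →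
      0 < ‖(Matrix.toEuclideanLin V.transpose) (p j - p i)‖ →
      (‖(Matrix.toEuclideanLin V.transpose) (p j - p i)‖ / spDist G w' i j) /
        (‖p j - p i‖ / spDist G w i j) ≤ 1 / φG :=
  uniform_graphwise_bound_general G p V hV w w' hw hw' φG hφG hφGpos
end
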